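/- Assume L < 0. Then for every j ≥ 0 the coefficient of x^r in P^{(j)} vanishes for all r < −((2j+1)p−1)d, and the coefficient of x^{−((2j+1)p−1)d} in P^{(j)} equals (−1)^j·C(−L+j−1, j)·ω^{L−j}, which is nonzero; hence for every j ≥ 0 the minimal x-degree of P^{(j)} is exactly −((2j+1)p−1)d with leading coefficient (−1)^j·C(−L+j−1, j)·ω^{L−j}. -/

import Mathlib

/-! Write `L = -(m+1)`. Since `f_d = q^L`, the lowest coefficient of the left-hand side is
`[h^j] (ω+h)^{-(m+1)}`, which is read off from `ω + h = ω · (1 + h/ω)` and the negative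
binomial series: it equals `(-1)^j C(m+j, j) ω^{L-j} ≠ 0`. Clearing the denominator,
`P^{(j)} = (∑_{n≥d} [h^j] f_n(ω+h) xⁿ) · Δ(x^p)^{2j+1}`, and `Δ(x^p)^{2j+1}` starts with
`x^{-(2j+1)pd}` with coefficient `1`; lowest terms of Laurent series multiply. -/

/-- The unit `a + h` of the power series ring `K[[h]]`, for `a ≠ 0`. -/
noncomputable def substUnit (K : Type*) [Field K] (a : K) (ha : a ≠ 0) : (PowerSeries K)ˣ :=
  Units.mkOfMulEqOne (PowerSeries.C a + PowerSeries.X)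
    (PowerSeries.C a + PowerSeries.X)⁻¹
    (PowerSeries.mul_inv_cancel _ (by simp [ha]))

/-- Substitution of the unit `U` (e.g. `1 + h` or `ω + h`) for `q` in a Laurent
polynomial `f ∈ ℤ[q,q⁻¹]`, represented by its finitely supported coefficient function
`f : ℤ →₀ ℤ`; the result `f(U) = ∑_a f_a · U^a` lies in `K[[h]]`. -/
noncomputable def lsubst {K : Type*} [Field K] (U : (PowerSeries K)ˣ) (f : ℤ →₀ ℤ) :
    PowerSeries K :=
  ∑ a ∈ f.support, ((f a : ℤ) : PowerSeries K) * ((U ^ a : (PowerSeries K)ˣ) : PowerSeries K)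

/-- The formal Laurent series `∑_{n ≥ d} c_n xⁿ ∈ K((x))`. -/
noncomputable def seriesOf {K : Type*} [Field K] (d : ℤ) (c : ℤ → K) : LaurentSeries K :=
  HahnSeries.single d 1 * HahnSeries.ofPowerSeries ℤ K (PowerSeries.mk fun i => c (d + i))

/-- A Laurent polynomial over `K`, represented by its finitely supported coefficient
function `g : ℤ →₀ K`, viewed inside the field of formal Laurent series `K((x))`. -/
noncomputable def finsuppToLS {K : Type*} [Zero K] (g : ℤ →₀ K) : LaurentSeries K :=
  { coeff := ⇑g, isPWO_support' := g.finite_support.isPWO }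

/-- A Laurent polynomial with integer coefficients, viewed inside `ℚ((x))`. -/
noncomputable def intLaurentToLS (g : ℤ →₀ ℤ) : LaurentSeries ℚ :=
  finsuppToLS (g.mapRange (fun a : ℤ => (a : ℚ)) (by simp))

/-- `F` (given by its Laurent-polynomial coefficients `f n ∈ ℤ[q,q⁻¹]`, supported in
degrees `n ≥ d`) admits an MMR expansion with data `(Δ, P)`: for every `j ≥ 0`, the
Laurent series `∑_{n ≥ d} ([h^j] f_n(1+h)) xⁿ` equals `P^{(j)}(x)/Δ(x)^{2j+1}` in
`ℚ((x))`, where `P⁰ = 1`. -/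
def HasMMRExpansion (d : ℤ) (f : ℤ → (ℤ →₀ ℤ)) (Δ : ℤ →₀ ℤ) (P : ℕ → (ℤ →₀ ℚ)) : Prop :=
  Δ ≠ 0 ∧ P 0 = Finsupp.single 0 1 ∧
  ∀ j : ℕ,
    seriesOf d (fun r =>
        PowerSeries.coeff j (lsubst (substUnit ℚ 1 one_ne_zero) (f r))) =
      finsuppToLS (P j) / (intLaurentToLS Δ) ^ (2 * j + 1)

/-- A Laurent polynomial with integer coefficients, with `x` replaced by `x^p`,
viewed inside `ℂ((x))`. -/
noncomputable def intLaurentXpToC (p : ℕ) (g : ℤ →₀ ℤ) : LaurentSeries ℂ :=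
  finsuppToLS ((g.mapDomain fun a => (p : ℤ) * a).mapRange (fun a : ℤ => (a : ℂ)) (by simp))

namespace PowerSeries

variable {K : Type*} [Field K]

theorem C_add_X_eq_C_mul_rescale (a : K) (ha : a ≠ 0) :
    (C a + X : K⟦X⟧) = C a * rescale (-a⁻¹) (1 - X) := by
  rw [map_sub, map_one, rescale_X, mul_sub, mul_one, ← mul_assoc, ← map_mul]
  simp [ha, sub_eq_add_neg]

theorem coe_substUnit_zpow_neg (a : K) (ha : a ≠ 0) (m : ℕ) :
    ((substUnit K a ha ^ (-((m : ℤ) + 1)) : K⟦X⟧ˣ) : K⟦X⟧) =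
      C (a ^ (m + 1))⁻¹ * rescale (-a⁻¹) (mk fun n => ((m + n).choose m : K)) := by
  rw [show -((m : ℤ) + 1) = -((m + 1 : ℕ) : ℤ) by push_cast; ring, zpow_neg, zpow_natCast]
  refine Units.inv_eq_of_mul_eq_one_right ?_
  rw [Units.val_pow_eq_pow_val,
    show ((substUnit K a ha : K⟦X⟧ˣ) : K⟦X⟧) = C a + X from rfl,
    C_add_X_eq_C_mul_rescale a ha, mul_pow, ← map_pow, ← map_pow, mul_mul_mul_comm, ← map_mul,
    ← map_mul, mul_inv_cancel₀ (pow_ne_zero _ ha), mul_comm ((1 - X) ^ _),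
    mk_add_choose_mul_one_sub_pow_eq_one, map_one, map_one, one_mul]

theorem coeff_substUnit_zpow_neg (a : K) (ha : a ≠ 0) (m j : ℕ) :
    coeff j ((substUnit K a ha ^ (-((m : ℤ) + 1)) : K⟦X⟧ˣ) : K⟦X⟧) =
      (-1) ^ j * ((m + j).choose j : K) * a ^ (-((m : ℤ) + 1) - j) := by
  rw [coe_substUnit_zpow_neg, coeff_C_mul, coeff_rescale, coeff_mk, Nat.choose_symm_add,
    zpow_sub₀ ha, zpow_neg, zpow_natCast, ← Nat.cast_succ, zpow_natCast, neg_pow, inv_pow,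
    pow_succ]
  ring

end PowerSeries

namespace HahnSeries

variable {Γ R : Type*} [AddCommMonoid Γ] [LinearOrder Γ] [IsOrderedCancelAddMonoid Γ]

section Semiring

variable [NonUnitalNonAssocSemiring R] {x y : R⟦Γ⟧} {a b : Γ}

theorem coeff_mul_eq_zero_of_lt_add (hx : (a : WithTop Γ) ≤ x.orderTop)
    (hy : (b : WithTop Γ) ≤ y.orderTop) {r : Γ} (hr : r < a + b) : (x * y).coeff r = 0 :=
  coeff_eq_zero_of_lt_orderTop <| (WithTop.coe_lt_coe.mpr hr).trans_le <|
    (add_le_add hx hy).trans orderTop_add_le_mul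

theorem coeff_mul_add_of_le_orderTop (hx : (a : WithTop Γ) ≤ x.orderTop)
    (hy : (b : WithTop Γ) ≤ y.orderTop) :
    (x * y).coeff (a + b) = x.coeff a * y.coeff b := by
  rw [le_orderTop_iff_forall] at hx hy
  rw [coeff_mul, Finset.sum_eq_single (a, b)]
  · rintro ⟨i, j⟩ hij hne
    obtain ⟨-, -, hsum⟩ := Finset.mem_antidiagonal.mp hij
    rcases lt_trichotomy i a with hi | rfl | hi
    · rw [hx i (WithTop.coe_lt_coe.mpr hi), zero_mul]
    · exact absurd (congrArg _ (add_left_cancel hsum)) hne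
    · have hj : j < b := lt_of_not_ge fun hj => (add_lt_add_of_lt_of_le hi hj).ne' hsum
      rw [hy j (WithTop.coe_lt_coe.mpr hj), mul_zero]
  · intro hab
    simp only [Finset.mem_antidiagonal, mem_support, and_true, not_and_or, not_not] at hab
    rcases hab with h | h <;> simp [h]

end Semiring

variable [Semiring R] {y : R⟦Γ⟧} {b : Γ}

theorem nsmul_le_orderTop_pow (hy : (b : WithTop Γ) ≤ y.orderTop) (n : ℕ) :
    ((n • b : Γ) : WithTop Γ) ≤ (y ^ n).orderTop := by
  rw [WithTop.coe_nsmul]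
  exact (nsmul_le_nsmul_right hy n).trans orderTop_nsmul_le_orderTop_pow

theorem coeff_pow_nsmul_of_le_orderTop (hy : (b : WithTop Γ) ≤ y.orderTop) (n : ℕ) :
    (y ^ n).coeff (n • b) = y.coeff b ^ n := by
  induction n with
  | zero => simp
  | succ n ih =>
    rw [pow_succ, succ_nsmul, coeff_mul_add_of_le_orderTop (nsmul_le_orderTop_pow hy n) hy, ih,
      pow_succ]

end HahnSeries

theorem lsubst_single {K : Type*} [Field K] (U : (PowerSeries K)ˣ) (a : ℤ) {c : ℤ}
    (hc : c ≠ 0) :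
    lsubst U (Finsupp.single a c) =
      (c : PowerSeries K) * ((U ^ a : (PowerSeries K)ˣ) : PowerSeries K) := by
  simp [lsubst, Finsupp.support_single a hc]

theorem coeff_seriesOf {K : Type*} [Field K] (d : ℤ) (c : ℤ → K) (r : ℤ) :
    (seriesOf d c).coeff r = if d ≤ r then c r else 0 := by
  have h := HahnSeries.coeff_single_mul_add (r := 1) (a := r - d) (b := d)
    (x := HahnSeries.ofPowerSeries ℤ K (PowerSeries.mk fun i => c (d + i)))
  rw [sub_add_cancel, one_mul] at h
  rw [seriesOf, h, PowerSeries.coeff_coe]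
  by_cases hdr : d ≤ r
  · rw [if_neg (by omega), if_pos hdr, PowerSeries.coeff_mk, Int.natAbs_of_nonneg (by omega),
      add_sub_cancel]
  · rw [if_pos (by omega), if_neg hdr]

theorem le_orderTop_seriesOf {K : Type*} [Field K] (d : ℤ) (c : ℤ → K) :
    (d : WithTop ℤ) ≤ (seriesOf d c).orderTop :=
  HahnSeries.le_orderTop_iff_forall.mpr fun r hr => by
    rw [coeff_seriesOf, if_neg (not_le.mpr (WithTop.coe_lt_coe.mp hr))]

theorem coeff_intLaurentXpToC_mul {p : ℕ} (hp : p ≠ 0) (g : ℤ →₀ ℤ) (a : ℤ) :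
    (intLaurentXpToC p g).coeff (p * a) = g a := by
  simp [intLaurentXpToC, finsuppToLS,
    Finsupp.mapDomain_apply (mul_right_injective₀ (Int.natCast_ne_zero.mpr hp))]

theorem le_orderTop_intLaurentXpToC {p : ℕ} (hp : p ≠ 0) {g : ℤ →₀ ℤ} {a : ℤ}
    (hg : ∀ r < a, g r = 0) :
    ((p * a : ℤ) : WithTop ℤ) ≤ (intLaurentXpToC p g).orderTop := by
  refine HahnSeries.le_orderTop_iff_forall.mpr fun r hr => ?_
  by_cases hr' : ∃ b, (p : ℤ) * b = r
  · obtain ⟨b, rfl⟩ := hr'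
    rw [coeff_intLaurentXpToC_mul hp, hg b (lt_of_mul_lt_mul_left (WithTop.coe_lt_coe.mp hr)
      (Int.natCast_nonneg p)), Int.cast_zero]
  · simp [intLaurentXpToC, finsuppToLS, Finsupp.mapDomain_of_notMem_range _ _ (by simpa using hr')]

theorem mmr_root_of_unity_neg_L (d L : ℤ) (hL : L < 0) (p : ℕ) (hp : 1 ≤ p)
    (ω : ℂ) (hω : IsPrimitiveRoot ω p)
    (f : ℤ → (ℤ →₀ ℤ))
    (hfd : f d = Finsupp.single L 1)
    (Δ : ℤ →₀ ℤ) (hΔd : Δ (-d) = 1) (hΔlow : ∀ r : ℤ, r < -d → Δ r = 0)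
    (P : ℕ → (ℤ →₀ ℂ))
    (hid : ∀ j : ℕ,
      seriesOf d (fun r =>
          PowerSeries.coeff j (lsubst (substUnit ℂ ω (hω.ne_zero (by omega))) (f r))) =
        finsuppToLS (P j) / (intLaurentXpToC p Δ) ^ (2 * j + 1)) :
    ∀ j : ℕ,
      (∀ r : ℤ, r < -(((2 * (j : ℤ) + 1) * (p : ℤ) - 1) * d) → P j r = 0) ∧
      P j (-(((2 * (j : ℤ) + 1) * (p : ℤ) - 1) * d)) =
        ((-1) ^ j * ((-L + j - 1).toNat.choose j) : ℂ) * ω ^ (L - (j : ℤ)) ∧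
      P j (-(((2 * (j : ℤ) + 1) * (p : ℤ) - 1) * d)) ≠ 0 := by
  intro j
  have hp₀ : p ≠ 0 := by omega
  have hω₀ : ω ≠ 0 := hω.ne_zero hp₀
  obtain ⟨m, rfl⟩ : ∃ m : ℕ, L = -((m : ℤ) + 1) := ⟨(-L - 1).toNat, by omega⟩
  set S := seriesOf d fun r => PowerSeries.coeff j (lsubst (substUnit ℂ ω hω₀) (f r))
  set B := intLaurentXpToC p Δ
  have hS : S.coeff d = (-1) ^ j * ((m + j).choose j : ℂ) * ω ^ (-((m : ℤ) + 1) - j) := by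
    rw [coeff_seriesOf, if_pos le_rfl, hfd, lsubst_single _ _ one_ne_zero, Int.cast_one, one_mul,
      PowerSeries.coeff_substUnit_zpow_neg]
  have hB := le_orderTop_intLaurentXpToC hp₀ hΔlow
  have hBn : (B ^ (2 * j + 1)).coeff ((2 * j + 1) • (p * -d)) = 1 := by
    rw [HahnSeries.coeff_pow_nsmul_of_le_orderTop hB, coeff_intLaurentXpToC_mul hp₀, hΔd,
      Int.cast_one, one_pow]
  have hP : ∀ r, P j r = (S * B ^ (2 * j + 1)).coeff r := by
    have hBn₀ : B ^ (2 * j + 1) ≠ 0 := fun h => by simp [h] at hBn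
    intro r
    rw [← (div_eq_iff hBn₀).mp (hid j).symm]
    rfl
  have hlow : -(((2 * (j : ℤ) + 1) * p - 1) * d) = d + (2 * j + 1) • (p * -d) := by
    rw [nsmul_eq_mul]; push_cast; ring
  have hlead : P j (-(((2 * (j : ℤ) + 1) * p - 1) * d)) =
      (-1) ^ j * ((m + j).choose j : ℂ) * ω ^ (-((m : ℤ) + 1) - j) := by
    rw [hP, hlow, HahnSeries.coeff_mul_add_of_le_orderTop (le_orderTop_seriesOf d _)
      (HahnSeries.nsmul_le_orderTop_pow hB _), hBn, mul_one, hS]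
  refine ⟨fun r hr => ?_, ?_, ?_⟩
  · rw [hP, HahnSeries.coeff_mul_eq_zero_of_lt_add (le_orderTop_seriesOf d _)
      (HahnSeries.nsmul_le_orderTop_pow hB _) (hlow ▸ hr)]
  · rw [hlead, show (-(-((m : ℤ) + 1)) + j - 1).toNat = m + j by omega]
  · rw [hlead]
    exact mul_ne_zero (mul_ne_zero (pow_ne_zero _ (neg_ne_zero.mpr one_ne_zero))
      (Nat.cast_ne_zero.mpr (Nat.choose_pos (Nat.le_add_left j m)).ne')) (zpow_ne_zero _ hω₀)
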